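/- If every triangle in an AL-monoid A is isosceles (for all distinct a,b,c, two of the three distances a*b, b*c, c*a are equal), then A is a chain. -/
import Mathlib


/-- An Autometrized lattice ordered monoid (AL-monoid). -/
class ALMonoid (A : Type*) extends Lattice A, AddCommMonoid A where
  amul : A → A → A
  add_le_add_left' : ∀ a b : A, a ≤ b → ∀ c : A, c + a ≤ c + b
  amul_core : ∀ a b : A, amul a (a ⊓ b) + b = a ⊔ b
  add_contract : ∀ a x y : A, amul (a + x) (a + y) ≤ amul x y
  sup_contract : ∀ a x y : A, amul (a ⊔ x) (a ⊔ y) ≤ amul x y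
  inf_contract : ∀ a x y : A, amul (a ⊓ x) (a ⊓ y) ≤ amul x y
  amul_contract : ∀ a x y : A, amul (amul a x) (amul a y) ≤ amul x y
  inf_amul_sup : ∀ a b : A, amul a (a ⊔ b) ⊓ amul b (a ⊔ b) = 0
  amul_nonneg : ∀ a b : A, 0 ≤ amul a b
  amul_eq_zero_iff : ∀ a b : A, amul a b = 0 ↔ a = b
  amul_comm : ∀ a b : A, amul a b = amul b a
  amul_triangle : ∀ a b c : A, amul a b ≤ amul a c + amul c b

open ALMonoid

infixl:70 " ⋆ " => ALMonoid.amul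

theorem stmt5 {A : Type*} [ALMonoid A]
    (hiso : ∀ a b c : A, a ≠ b → b ≠ c → c ≠ a →
      a ⋆ b = b ⋆ c ∨ b ⋆ c = c ⋆ a ∨ c ⋆ a = a ⋆ b) :
    ∀ x y : A, x ≤ y ∨ y ≤ x := by
  intro x y
  by_contra h
  push_neg at h
  obtain ⟨hxy, hyx⟩ := h
  have hne : x ≠ y := fun he => hxy (le_of_eq he)
  have hyj : y ≠ x ⊔ y := by
    intro he
    exact hxy (le_sup_left.trans he.ge)
  have hjx : x ⊔ y ≠ x := by
    intro he
    exact hyx (le_sup_right.trans he.le)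
  have hr : x ⋆ (x ⊔ y) ≤ x ⋆ y := by
    have := sup_contract x x y
    rwa [sup_idem] at this
  have hs : y ⋆ (x ⊔ y) ≤ x ⋆ y := by
    have := sup_contract y y x
    rwa [sup_idem, sup_comm y x, amul_comm y x] at this
  have hinf := inf_amul_sup x y
  have hr0 : x ⋆ (x ⊔ y) ≠ 0 := by
    intro h0
    have := (amul_eq_zero_iff x (x ⊔ y)).mp h0
    exact hyx (le_sup_right.trans this.ge)
  have hs0 : y ⋆ (x ⊔ y) ≠ 0 := by
    intro h0
    have := (amul_eq_zero_iff y (x ⊔ y)).mp h0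
    exact hxy (le_sup_left.trans this.ge)
  rcases hiso x y (x ⊔ y) hne hyj hjx with h1 | h2 | h3
  · -- x⋆y = y⋆(x⊔y) : then r ≤ s, so r ⊓ s = r = 0
    have : x ⋆ (x ⊔ y) ≤ y ⋆ (x ⊔ y) := h1 ▸ hr
    exact hr0 (by rw [← hinf, inf_eq_left.mpr this])
  · -- y⋆(x⊔y) = (x⊔y)⋆x : s = r
    have : x ⋆ (x ⊔ y) ≤ y ⋆ (x ⊔ y) := le_of_eq (by rw [h2, amul_comm])
    exact hr0 (by rw [← hinf, inf_eq_left.mpr this])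
  · -- (x⊔y)⋆x = x⋆y : r = x⋆y, so s ≤ r, s = 0
    have : y ⋆ (x ⊔ y) ≤ x ⋆ (x ⊔ y) := by
      rw [amul_comm x (x ⊔ y), h3]; exact hs
    exact hs0 (by rw [← hinf, inf_eq_right.mpr this])
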